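/- For all u, v ∈ ℂ with u ≠ 0 and v ≠ 0, the matrices A = [[0,1],[−1,0]], B = [[u,0],[0,u⁻¹]], C = [[v,0],[0,v⁻¹]] in SL₂(ℂ) satisfy (A·B)² = (B·A)², (A·C)² = (C·A)² and B·C = C·B. (Hence a ↦ A, b ↦ B, c ↦ C defines a two-parameter family of representations into SL₂(ℂ) of the group Γ₂′ = ⟨a,b,c | (ab)²(ba)⁻² = (ac)²(ca)⁻² = [b,c] = 1⟩, the fundamental group of the complement of three lines tangent to a conic.) -/

import Mathlib

/-! The rotation `A` normalises the diagonal torus of `SL₂(ℂ)`, acting on it by inversion: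
`A B = B⁻¹ A`. In any group, `a b = b⁻¹ a` gives `(a b)² = a² = (b a)²`, and diagonal matrices
commute. -/

/-- `SL₂(ℂ)`: the group of 2×2 complex matrices of determinant 1. -/
abbrev SL2 : Type := Matrix.SpecialLinearGroup (Fin 2) ℂ

/-- The element of `SL₂(ℂ)` with entries `a b c d`, given a proof of determinant one. -/
def mk2 (a b c d : ℂ) (h : a * d - b * c = 1) : SL2 :=
  ⟨!![a, b; c, d], by rw [Matrix.det_fin_two_of]; exact h⟩

theorem mul_sq_eq_mul_sq_of_mul_eq_inv_mul {G : Type*} [Group G] {a b : G}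
    (h : a * b = b⁻¹ * a) : (a * b) ^ 2 = (b * a) ^ 2 := by
  rw [sq, sq]
  calc a * b * (a * b) = a * b * (b⁻¹ * a) := by rw [← h]
    _ = b * (b⁻¹ * a) * a := by group
    _ = b * a * (b * a) := by rw [← h]; group

@[simp] theorem coe_mk2 (a b c d : ℂ) (h : a * d - b * c = 1) :
    ((mk2 a b c d h : SL2) : Matrix (Fin 2) (Fin 2) ℂ) = !![a, b; c, d] := rfl

theorem mk2_mul_mk2 {a b c d a' b' c' d' : ℂ} (h : a * d - b * c = 1)
    (h' : a' * d' - b' * c' = 1) :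
    mk2 a b c d h * mk2 a' b' c' d' h' =
      mk2 (a * a' + b * c') (a * b' + b * d') (c * a' + d * c') (c * b' + d * d')
        (by linear_combination (a' * d' - b' * c') * h + h') := by
  ext : 1
  simp

theorem inv_mk2 {a b c d : ℂ} (h : a * d - b * c = 1) :
    (mk2 a b c d h)⁻¹ = mk2 d (-b) (-c) a (by linear_combination h) := by
  ext : 1
  simp [Matrix.SpecialLinearGroup.coe_inv, Matrix.adjugate_fin_two]

theorem rot_mul_diag {u : ℂ} (hA : (0 : ℂ) * 0 - 1 * -1 = 1) (hu : u * u⁻¹ - 0 * 0 = 1) :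
    mk2 0 1 (-1) 0 hA * mk2 u 0 0 u⁻¹ hu = (mk2 u 0 0 u⁻¹ hu)⁻¹ * mk2 0 1 (-1) 0 hA := by
  simp [inv_mk2, mk2_mul_mk2]

theorem diag_mul_diag_comm {u v : ℂ} (hu : u * u⁻¹ - 0 * 0 = 1) (hv : v * v⁻¹ - 0 * 0 = 1) :
    mk2 u 0 0 u⁻¹ hu * mk2 v 0 0 v⁻¹ hv = mk2 v 0 0 v⁻¹ hv * mk2 u 0 0 u⁻¹ hu := by
  simp [mk2_mul_mk2, mul_comm]

/-- For nonzero `u, v`, the matrices `A = [[0,1],[−1,0]]`, `B = [[u,0],[0,u⁻¹]]`,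
`C = [[v,0],[0,v⁻¹]]` satisfy `(AB)² = (BA)²`, `(AC)² = (CA)²` and `BC = CB`: a
two-parameter family of representations into `SL₂(ℂ)` of
`Γ₂′ = ⟨a,b,c | (ab)²(ba)⁻² = (ac)²(ca)⁻² = [b,c] = 1⟩`, the fundamental group of the
complement of three lines tangent to a conic. -/
theorem Gamma2'_family (u v : ℂ) (hu : u ≠ 0) (hv : v ≠ 0) :
    let A : SL2 := mk2 0 1 (-1) 0 (by norm_num)
    let B : SL2 := mk2 u 0 0 u⁻¹ (by field_simp; norm_num)
    let C : SL2 := mk2 v 0 0 v⁻¹ (by field_simp; norm_num)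
    (A * B) ^ 2 = (B * A) ^ 2 ∧ (A * C) ^ 2 = (C * A) ^ 2 ∧ B * C = C * B :=
  ⟨mul_sq_eq_mul_sq_of_mul_eq_inv_mul (rot_mul_diag _ _),
    mul_sq_eq_mul_sq_of_mul_eq_inv_mul (rot_mul_diag _ _), diag_mul_diag_comm _ _⟩
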